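/- arXiv:2305.02970 — 5 statements merged into one kernel-verified Lean document; each statement's English description precedes it below -/
import Mathlib

section
/- For every dimension d ≥ 1, every probability measure P_X on ℝ^d, every Markov kernel P_{Y|X}, and every integer M ≥ 2, the minimum mean squared error is lower bounded by the Ziv–Zakai bound with valley-filling: mmse(X|Y) ≥ ZZ̄(P_X, P_{Y|X}, M). -/
open MeasureTheory ProbabilityTheory ENNReal

noncomputable section

variable {d : ℕ} {𝒴 : Type*} [MeasurableSpace 𝒴]

/-- Law of `X - u` when `X ∼ P`. -/
def shiftLaw (P : Measure (Fin d → ℝ)) (u : Fin d → ℝ) : Measure (Fin d → ℝ) :=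
  P.map (· - u)

/-- The mixture measure `μ_U = ∑_k P_{X-u_k}`. -/
def mixMeasure (P : Measure (Fin d → ℝ)) {M : ℕ} (U : Fin M → Fin d → ℝ) :
    Measure (Fin d → ℝ) :=
  ∑ k : Fin M, shiftLaw P (U k)

/-- The prior `p_i(x) = dP_{X-u_i}/dμ_U (x)`. -/
def prior (P : Measure (Fin d → ℝ)) {M : ℕ} (U : Fin M → Fin d → ℝ) (i : Fin M)
    (x : Fin d → ℝ) : ℝ≥0∞ :=
  (shiftLaw P (U i)).rnDeriv (mixMeasure P U) x

/-- Minimum Bayes error probability of the `M`-ary hypothesis test where hypothesis `i`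
has prior `p_i(x)` and observation law `κ(·|x+u_i)`. -/
def bayesError (P : Measure (Fin d → ℝ)) (κ : Kernel (Fin d → ℝ) 𝒴) {M : ℕ}
    (U : Fin M → Fin d → ℝ) (x : Fin d → ℝ) : ℝ≥0∞ :=
  ⨅ (φ : 𝒴 → Fin M) (_ : Measurable φ),
    ∑ i : Fin M, prior P U i x * κ (x + U i) {y | φ y ≠ i}

/-- `h(t,i,M)`. -/
def hFun (P : Measure (Fin d → ℝ)) (κ : Kernel (Fin d → ℝ) 𝒴) (M : ℕ) (t : ℝ)
    (i : Fin d) : ℝ≥0∞ :=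
  ⨆ (U : Fin M → Fin d → ℝ) (_ : ∀ k : Fin M, U k i = (k : ℝ) * t),
    ∫⁻ x, bayesError P κ U x ∂(mixMeasure P U)

/-- Ziv-Zakai bound without valley-filling. -/
def ZZ (P : Measure (Fin d → ℝ)) (κ : Kernel (Fin d → ℝ) 𝒴) (M : ℕ) : ℝ≥0∞ :=
  ∑ i : Fin d, ∫⁻ t in Set.Ioi (0 : ℝ),
    ENNReal.ofReal (t / 2) * (hFun P κ M t i / ((M : ℝ≥0∞) - 1))

/-- Ziv-Zakai bound with valley-filling. -/
def ZZbar (P : Measure (Fin d → ℝ)) (κ : Kernel (Fin d → ℝ) 𝒴) (M : ℕ) : ℝ≥0∞ :=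
  ∑ i : Fin d, ∫⁻ t in Set.Ioi (0 : ℝ),
    ENNReal.ofReal (t / 2) * ⨆ (u : ℝ) (_ : t ≤ u), hFun P κ M u i / ((M : ℝ≥0∞) - 1)

/-- The MMSE `∑_i E[(X_i - E[X_i|Y])²]` for `X ∼ P` and `Y|X=x ∼ κ(·|x)`, computed on the
joint law `P ⊗ₘ κ`; the conditional expectation is with respect to the σ-algebra
generated by `Y`. -/
def mmse (P : Measure (Fin d → ℝ)) (κ : Kernel (Fin d → ℝ) 𝒴) [SFinite P]
    [IsSFiniteKernel κ] : ℝ≥0∞ :=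
  ∑ i : Fin d, ∫⁻ p,
    ENNReal.ofReal ((p.1 i -
      (condExp (MeasurableSpace.comap Prod.snd inferInstance) (P.compProd κ)
        (fun q => q.1 i)) p) ^ 2) ∂(P.compProd κ)

/-!
Fix a coordinate `i` and let `g(Y)` be the conditional mean of `X_i` given `Y`. Any estimator
gives a decision rule for the `M`-ary test behind `h(t, i, M)`: at the mixture point `x`, guess the
hypothesis `j` whose coordinate `x_i + j t` is nearest to `g(Y)`. After the change of variables
`x ↦ x + u_j`, which turns `p_j dμ_U` back into `P_X`, hypothesis `j` errs only if `g(Y)`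
overshoots `X_i` by `t/2` (impossible for the last `j`) or undershoots it by `t/2` (impossible for
`j = 0`). Summing over `j` therefore gives `h(t, i, M) ≤ (M - 1) P(|X_i - g(Y)| ≥ t/2)`. The right
side is antitone in `t`, so the bound survives valley-filling, and the layer-cake formula turns
`∫ t/2 · P(|X_i - g(Y)| ≥ t/2) dt` into `E[(X_i - g(Y))²]`.
-/

open Set Finset

lemma lintegral_sq_eq_lintegral_half_mul_meas_le {α : Type*} [MeasurableSpace α]
    (μ : Measure α) {e : α → ℝ} (he : AEMeasurable e μ) :
    ∫⁻ a, ENNReal.ofReal (e a ^ 2) ∂μ =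
      ∫⁻ t in Ioi 0, ENNReal.ofReal (t / 2) * μ {a | t / 2 ≤ |e a|} := by
  have key := lintegral_comp_eq_lintegral_meas_le_mul μ (f := fun a => 2 * |e a|)
    (g := fun t => t / 2) (ae_of_all _ fun a => by positivity) (he.abs.const_mul 2)
    (fun t _ => (continuous_id.div_const 2).intervalIntegrable _ _)
    ((ae_restrict_iff' measurableSet_Ioi).2 (ae_of_all _ fun _ ht => (half_pos ht).le))
  simp only [intervalIntegral.integral_div, integral_id] at key
  convert key using 3 with a t
  · congr 1
    rw [mul_pow, sq_abs]
    ring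
  · simp only [mul_comm, div_le_iff₀ (two_pos : (0 : ℝ) < 2)]

def nearestIndex (m : ℕ) (t z : ℝ) : Fin (m + 1) := Fin.clamp ⌊z / t + 1 / 2⌋₊ m

lemma measurable_nearestIndex (m : ℕ) (t : ℝ) : Measurable (nearestIndex m t) :=
  (measurable_from_top (f := fun n => Fin.clamp n m)).comp
    (Nat.measurable_floor.comp ((measurable_div_const t).add_const _))

lemma nearestIndex_ne {m : ℕ} {t z : ℝ} (ht : 0 < t) {j : Fin (m + 1)}
    (h : nearestIndex m t z ≠ j) :
    (j ≠ Fin.last m ∧ t / 2 ≤ z - j * t) ∨ (j ≠ 0 ∧ z - j * t < -(t / 2)) := by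
  have hj := j.is_le
  have hz : z / t * t = z := div_mul_cancel₀ z ht.ne'
  rw [nearestIndex, Ne, Fin.ext_iff, Fin.coe_clamp] at h
  rcases Nat.lt_or_gt_of_ne h with hlt | hlt
  · refine .inr ⟨Fin.ne_of_val_ne (by simp only [Fin.val_zero]; omega), ?_⟩
    have : z / t + 1 / 2 < j := (Nat.floor_lt' (by omega)).1 (by omega)
    nlinarith
  · refine .inl ⟨Fin.ne_of_val_ne (by simp only [Fin.val_last]; omega), ?_⟩
    have : ((j + 1 : ℕ) : ℝ) ≤ z / t + 1 / 2 := (Nat.le_floor_iff' (by omega)).1 (by omega)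
    push_cast at this
    nlinarith

lemma sum_measure_setOf_ne_last_and (ν : Measure 𝒴) (m : ℕ) (p : 𝒴 → Prop) :
    ∑ j : Fin (m + 1), ν {y | j ≠ Fin.last m ∧ p y} = m * ν {y | p y} := by
  simp [Fin.sum_univ_castSucc, Fin.castSucc_ne_last]

lemma sum_measure_setOf_ne_zero_and (ν : Measure 𝒴) (m : ℕ) (p : 𝒴 → Prop) :
    ∑ j : Fin (m + 1), ν {y | j ≠ 0 ∧ p y} = m * ν {y | p y} := by
  simp [Fin.sum_univ_succ, Fin.succ_ne_zero]

lemma sum_measure_ne_last_add_ne_zero_le (ν : Measure 𝒴) (m : ℕ) {t : ℝ} (ht : 0 ≤ t)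
    {w : 𝒴 → ℝ} (hw : Measurable w) :
    ∑ j : Fin (m + 1), (ν {y | j ≠ Fin.last m ∧ t / 2 ≤ w y} + ν {y | j ≠ 0 ∧ w y < -(t / 2)})
      ≤ m * ν {y | t / 2 ≤ |w y|} := by
  have hdisj : Disjoint {y | t / 2 ≤ w y} {y | w y < -(t / 2)} :=
    disjoint_left.2 fun y h₁ h₂ => by simp only [mem_ofPred_eq] at h₁ h₂; linarith
  rw [sum_add_distrib, sum_measure_setOf_ne_last_and, sum_measure_setOf_ne_zero_and, ← mul_add,
    ← measure_union hdisj (measurableSet_lt hw measurable_const)]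
  gcongr
  rintro y (h | h) <;> simp only [mem_ofPred_eq] at h ⊢
  · exact h.trans (le_abs_self _)
  · exact (le_neg.2 h.le).trans (neg_le_abs _)

section Mixture

variable (P : Measure (Fin d → ℝ)) {M : ℕ} (U : Fin M → Fin d → ℝ)

instance [IsFiniteMeasure P] (u : Fin d → ℝ) : IsFiniteMeasure (shiftLaw P u) := by
  unfold shiftLaw; infer_instance

instance [IsFiniteMeasure P] : IsFiniteMeasure (mixMeasure P U) := by
  unfold mixMeasure; infer_instance

lemma shiftLaw_le_mixMeasure (j : Fin M) : shiftLaw P (U j) ≤ mixMeasure P U := by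
  unfold mixMeasure
  exact single_le_sum (f := fun k => shiftLaw P (U k)) (fun _ _ => Measure.zero_le _) (mem_univ j)

lemma lintegral_prior_mul [IsFiniteMeasure P] (j : Fin M) {f : (Fin d → ℝ) → ℝ≥0∞}
    (hf : Measurable f) :
    ∫⁻ x, prior P U j x * f (x + U j) ∂mixMeasure P U = ∫⁻ x, f x ∂P := by
  have := Measure.haveLebesgueDecomposition_of_sigmaFinite (shiftLaw P (U j)) (mixMeasure P U)
  unfold prior
  rw [lintegral_rnDeriv_mul
      (Measure.absolutelyContinuous_of_le (shiftLaw_le_mixMeasure P U j))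
      (f := fun x => f (x + U j)) (hf.comp (measurable_add_const _)).aemeasurable,
    shiftLaw, lintegral_map (f := fun x => f (x + U j)) (hf.comp (measurable_add_const _))
      (measurable_sub_const _)]
  simp

lemma lintegral_bayesError_le [IsFiniteMeasure P] (κ : Kernel (Fin d → ℝ) 𝒴)
    (φ : (Fin d → ℝ) → 𝒴 → Fin M) (hφ : ∀ x, Measurable (φ x))
    (G : Fin M → (Fin d → ℝ) → ℝ≥0∞) (hG : ∀ j, Measurable (G j))
    (hφG : ∀ x j, κ (x + U j) {y | φ x y ≠ j} ≤ G j (x + U j)) :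
    ∫⁻ x, bayesError P κ U x ∂mixMeasure P U ≤ ∫⁻ x, ∑ j, G j x ∂P := by
  calc ∫⁻ x, bayesError P κ U x ∂mixMeasure P U
      ≤ ∫⁻ x, ∑ j, prior P U j x * G j (x + U j) ∂mixMeasure P U :=
        lintegral_mono fun x => (iInf₂_le (φ x) (hφ x)).trans <|
          sum_le_sum fun j _ => mul_le_mul_right (hφG x j) _
    _ = ∑ j, ∫⁻ x, G j x ∂P := by
        rw [lintegral_finsetSum (f := fun j x => prior P U j x * G j (x + U j)) _ fun j _ =>
          (Measure.measurable_rnDeriv _ _).mul ((hG j).comp (measurable_add_const _))]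
        exact sum_congr rfl fun j _ => lintegral_prior_mul P U j (hG j)
    _ = ∫⁻ x, ∑ j, G j x ∂P := (lintegral_finsetSum _ fun j _ => hG j).symm

end Mixture

lemma hFun_le_mul_measure (P : Measure (Fin d → ℝ)) [IsFiniteMeasure P]
    (κ : Kernel (Fin d → ℝ) 𝒴) [IsSFiniteKernel κ] (m : ℕ) {t : ℝ} (ht : 0 < t) (i : Fin d)
    {g : 𝒴 → ℝ} (hg : Measurable g) :
    hFun P κ (m + 1) t i ≤ m * (P ⊗ₘ κ) {q | t / 2 ≤ |q.1 i - g q.2|} := by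
  refine iSup₂_le fun U hU => ?_
  set G : Fin (m + 1) → (Fin d → ℝ) → ℝ≥0∞ := fun j x =>
    κ x {y | j ≠ Fin.last m ∧ t / 2 ≤ g y - x i} + κ x {y | j ≠ 0 ∧ g y - x i < -(t / 2)}
  have hG : ∀ j, Measurable (G j) := fun j => by
    refine .add (Kernel.measurable_kernel_prodMk_left
      (t := {q : (Fin d → ℝ) × 𝒴 | j ≠ Fin.last m ∧ t / 2 ≤ g q.2 - q.1 i}) ?_)
      (Kernel.measurable_kernel_prodMk_left
      (t := {q : (Fin d → ℝ) × 𝒴 | j ≠ 0 ∧ g q.2 - q.1 i < -(t / 2)}) ?_) <;> measurability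
  have hφG : ∀ x j, κ (x + U j) {y | nearestIndex m t (g y - x i) ≠ j} ≤ G j (x + U j) := by
    refine fun x j => (measure_mono fun y hy => ?_).trans (measure_union_le _ _)
    have hxj : g y - (x + U j) i = g y - x i - j * t := by rw [Pi.add_apply, hU j]; ring
    simpa only [Set.mem_union, mem_ofPred_eq, hxj] using nearestIndex_ne ht hy
  have hE : MeasurableSet {q : (Fin d → ℝ) × 𝒴 | t / 2 ≤ |q.1 i - g q.2|} := by
    measurability
  calc ∫⁻ x, bayesError P κ U x ∂mixMeasure P U
      ≤ ∫⁻ x, ∑ j, G j x ∂P :=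
        lintegral_bayesError_le P U κ _ (fun x => (measurable_nearestIndex m t).comp
          (hg.sub_const _)) G hG hφG
    _ ≤ ∫⁻ x, m * κ x {y | t / 2 ≤ |x i - g y|} ∂P := lintegral_mono fun x => by
        simpa only [abs_sub_comm] using
          sum_measure_ne_last_add_ne_zero_le (κ x) m ht.le (hg.sub_const (x i))
    _ = m * (P ⊗ₘ κ) {q | t / 2 ≤ |q.1 i - g q.2|} := by
        rw [Measure.compProd_apply hE, ← lintegral_const_mul _
          (Kernel.measurable_kernel_prodMk_left hE)]
        rfl

lemma iSup_hFun_div_le (P : Measure (Fin d → ℝ)) [IsFiniteMeasure P]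
    (κ : Kernel (Fin d → ℝ) 𝒴) [IsSFiniteKernel κ] (m : ℕ) {t : ℝ} (ht : 0 < t) (i : Fin d)
    {g : 𝒴 → ℝ} (hg : Measurable g) :
    ⨆ (u : ℝ) (_ : t ≤ u), hFun P κ (m + 1) u i / m ≤ (P ⊗ₘ κ) {q | t / 2 ≤ |q.1 i - g q.2|} :=
  iSup₂_le fun u htu => ENNReal.div_le_of_le_mul' <|
    (hFun_le_mul_measure P κ m (ht.trans_le htu) i hg).trans <| by
      gcongr

theorem ziv_zakai_bound_with_valley_filling_general
    {d : ℕ} {𝒴 : Type*} [MeasurableSpace 𝒴]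
    (P : Measure (Fin d → ℝ)) [IsProbabilityMeasure P]
    (κ : Kernel (Fin d → ℝ) 𝒴) [IsMarkovKernel κ]
    (M : ℕ) (hM : 2 ≤ M) :
    ZZbar P κ M ≤ mmse P κ := by
  obtain ⟨m, rfl⟩ : ∃ m, M = m + 1 := ⟨M - 1, by omega⟩
  have hm : ((m + 1 : ℕ) : ℝ≥0∞) - 1 = m := by simp
  refine sum_le_sum fun i _ => ?_
  obtain ⟨g, hg, hcond⟩ := (stronglyMeasurable_condExp (m := MeasurableSpace.comap Prod.snd
    inferInstance) (μ := P ⊗ₘ κ) (f := fun q => q.1 i)).measurable.exists_eq_measurable_comp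
  calc ∫⁻ t in Ioi 0, ENNReal.ofReal (t / 2) *
        ⨆ (u : ℝ) (_ : t ≤ u), hFun P κ (m + 1) u i / (((m + 1 : ℕ) : ℝ≥0∞) - 1)
      ≤ ∫⁻ t in Ioi 0, ENNReal.ofReal (t / 2) * (P ⊗ₘ κ) {q | t / 2 ≤ |q.1 i - g q.2|} :=
        setLIntegral_mono' measurableSet_Ioi fun t ht => by
          rw [hm]
          gcongr
          exact iSup_hFun_div_le P κ m ht i hg
    _ = ∫⁻ q, ENNReal.ofReal ((q.1 i - g q.2) ^ 2) ∂(P ⊗ₘ κ) :=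
        (lintegral_sq_eq_lintegral_half_mul_meas_le _ (by fun_prop)).symm
    _ = _ := by rw [hcond]; rfl

/-- **Ziv–Zakai bound with valley-filling, arbitrary input distribution.**
For every `d ≥ 1`, every probability measure `P` on `ℝ^d`, every Markov kernel `κ`,
and every integer `M ≥ 2`, `mmse(X|Y) ≥ ZZ̄(P, κ, M)`. -/
theorem ziv_zakai_bound_with_valley_filling
    {d : ℕ} (hd : 1 ≤ d) {𝒴 : Type*} [MeasurableSpace 𝒴]
    (P : Measure (Fin d → ℝ)) [IsProbabilityMeasure P]
    (κ : Kernel (Fin d → ℝ) 𝒴) [IsMarkovKernel κ]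
    (M : ℕ) (hM : 2 ≤ M) :
    ZZbar P κ M ≤ mmse P κ :=
  ziv_zakai_bound_with_valley_filling_general P κ M hM
end
end

section
/- If X is discrete, i.e., its distribution P_X on ℝ^d is purely atomic with countable support, then the Ziv–Zakai bound without valley-filling vanishes: ZZ(P_X, P_{Y|X}, M) = 0 for every integer M ≥ 2 and every Markov kernel P_{Y|X}. -/
open MeasureTheory ProbabilityTheory ENNReal

noncomputable section

variable {d : ℕ} {𝒴 : Type*} [MeasurableSpace 𝒴]

/-! The atoms of `P` form a countable set `A` carrying `P`. Fix a coordinate `i`. Two translates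
`A - u_k`, `A - u_l` with `(u_k)_i = k t` can only meet if `t = (a_i - b_i) / (k - l)` for some
`a, b ∈ A`, so outside a countable (hence Lebesgue-null) set of `t` they are pairwise disjoint.
Then `μ_U`-a.e. `x` lies in exactly one translate `A - u_j`, all priors but `p_j(x)` vanish, and
the constant decision `j` has zero error: `h(t, i, M) = 0` for a.e. `t`. -/

lemma ae_rnDeriv_eq_zero_of_measure_eq_zero {α : Type*} [MeasurableSpace α]
    {μ ν : Measure α} {s : Set α} (hs : MeasurableSet s) (hμs : μ s = 0) :
    ∀ᵐ x ∂ν, x ∈ s → μ.rnDeriv ν x = 0 := by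
  have hint : ∫⁻ x in s, μ.rnDeriv ν x ∂ν = 0 :=
    nonpos_iff_eq_zero.mp (hμs ▸ Measure.setLIntegral_rnDeriv_le s)
  exact (ae_restrict_iff' hs).mp
    ((lintegral_eq_zero_iff (Measure.measurable_rnDeriv μ ν)).mp hint)

lemma bayesError_eq_zero_of_prior_eq_zero {P : Measure (Fin d → ℝ)} (κ : Kernel (Fin d → ℝ) 𝒴)
    {M : ℕ} {U : Fin M → Fin d → ℝ} {x : Fin d → ℝ} (j : Fin M)
    (hj : ∀ k ≠ j, prior P U k x = 0) : bayesError P κ U x = 0 := by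
  refine nonpos_iff_eq_zero.mp ((iInf₂_le (fun _ => j) measurable_const).trans ?_)
  refine (Finset.sum_eq_zero fun k _ => ?_).le
  by_cases hkj : k = j
  · simp [hkj]
  · simp [hj k hkj]

lemma shiftLaw_preimage_add_compl {P : Measure (Fin d → ℝ)} {A : Set (Fin d → ℝ)}
    (hA : MeasurableSet A) (u : Fin d → ℝ) :
    shiftLaw P u {x | x + u ∈ A}ᶜ = P Aᶜ := by
  have hs : MeasurableSet {x | x + u ∈ A} := hA.preimage (measurable_add_const u)
  rw [shiftLaw, Measure.map_apply (measurable_sub_const u) hs.compl]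
  congr 1
  ext x
  simp

lemma ae_mixMeasure_exists_add_mem {P : Measure (Fin d → ℝ)} {A : Set (Fin d → ℝ)}
    (hA : MeasurableSet A) (hPA : P Aᶜ = 0) {M : ℕ} (U : Fin M → Fin d → ℝ) :
    ∀ᵐ x ∂(mixMeasure P U), ∃ j, x + U j ∈ A := by
  rw [ae_iff, mixMeasure, Measure.coe_finsetSum, Finset.sum_apply]
  refine Finset.sum_eq_zero fun k _ => measure_mono_null (fun x hx => ?_)
    ((shiftLaw_preimage_add_compl hA (U k)).trans hPA)
  push Not at hx
  exact hx k

lemma lintegral_bayesError_eq_zero_of_pairwise_disjoint {P : Measure (Fin d → ℝ)}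
    {A : Set (Fin d → ℝ)} (hA : MeasurableSet A) (hPA : P Aᶜ = 0) (κ : Kernel (Fin d → ℝ) 𝒴)
    {M : ℕ} {U : Fin M → Fin d → ℝ}
    (hU : Pairwise fun k l => Disjoint {x | x + U k ∈ A} {x | x + U l ∈ A}) :
    ∫⁻ x, bayesError P κ U x ∂(mixMeasure P U) = 0 := by
  have hprior : ∀ᵐ x ∂(mixMeasure P U), ∀ k, x ∈ {x | x + U k ∈ A}ᶜ → prior P U k x = 0 :=
    ae_all_iff.mpr fun k => ae_rnDeriv_eq_zero_of_measure_eq_zero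
      (hA.preimage (measurable_add_const (U k))).compl
      ((shiftLaw_preimage_add_compl hA (U k)).trans hPA)
  refine (lintegral_congr_ae ?_).trans lintegral_zero
  filter_upwards [hprior, ae_mixMeasure_exists_add_mem hA hPA U] with x hx ⟨j, hj⟩
  exact bayesError_eq_zero_of_prior_eq_zero κ j fun k hkj =>
    hx k fun hk => Set.disjoint_left.mp (hU hkj) hk hj

/-- The spacings `t` at which translates `A - u_k`, `A - u_l` with `(u_k)_i = k t` may meet. -/
def collisionSpacings (A : Set (Fin d → ℝ)) (i : Fin d) : Set ℝ :=
  {t | ∃ a ∈ A, ∃ b ∈ A, ∃ n : ℤ, n ≠ 0 ∧ a i - b i = n * t}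

lemma Set.Countable.collisionSpacings {A : Set (Fin d → ℝ)} (hA : A.Countable) (i : Fin d) :
    (collisionSpacings A i).Countable := by
  refine ((hA.prod (hA.prod Set.countable_univ)).image
    fun p : (Fin d → ℝ) × (Fin d → ℝ) × ℤ => (p.1 i - p.2.1 i) / p.2.2).mono ?_
  rintro t ⟨a, ha, b, hb, n, hn, hab⟩
  refine ⟨(a, b, n), ⟨ha, hb, trivial⟩, ?_⟩
  simp only [hab]
  field_simp

lemma pairwise_disjoint_of_notMem_collisionSpacings {A : Set (Fin d → ℝ)} {i : Fin d} {t : ℝ}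
    (ht : t ∉ collisionSpacings A i)
    {M : ℕ} {U : Fin M → Fin d → ℝ} (hU : ∀ k : Fin M, U k i = (k : ℝ) * t) :
    Pairwise fun k l => Disjoint {x | x + U k ∈ A} {x | x + U l ∈ A} := by
  intro k l hkl
  refine Set.disjoint_left.mpr fun x hk hl => ht ⟨_, hk, _, hl, (k : ℤ) - l, ?_, ?_⟩
  · exact sub_ne_zero.mpr (by exact_mod_cast Fin.val_injective.ne hkl)
  · simp only [Pi.add_apply, hU]
    push_cast
    ring

lemma ZZ_eq_zero_of_ae_hFun_eq_zero {P : Measure (Fin d → ℝ)} {κ : Kernel (Fin d → ℝ) 𝒴}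
    {M : ℕ} (h : ∀ i, ∀ᵐ t, hFun P κ M t i = 0) : ZZ P κ M = 0 := by
  refine Finset.sum_eq_zero fun i _ => (lintegral_congr_ae ?_).trans lintegral_zero
  filter_upwards [ae_restrict_of_ae (h i)] with t ht
  simp [ht]

theorem ziv_zakai_discrete_eq_zero_general
    {d : ℕ} {𝒴 : Type*} [MeasurableSpace 𝒴]
    (P : Measure (Fin d → ℝ))
    (hcount : Set.Countable {x : Fin d → ℝ | P {x} ≠ 0})
    (hdisc : P {x : Fin d → ℝ | P {x} ≠ 0}ᶜ = 0)
    (κ : Kernel (Fin d → ℝ) 𝒴)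
    (M : ℕ) :
    ZZ P κ M = 0 := by
  refine ZZ_eq_zero_of_ae_hFun_eq_zero fun i => ?_
  filter_upwards [measure_eq_zero_iff_ae_notMem.mp
    ((hcount.collisionSpacings i).measure_zero volume)] with t ht
  exact nonpos_iff_eq_zero.mp <| iSup₂_le fun U hU =>
    (lintegral_bayesError_eq_zero_of_pairwise_disjoint hcount.measurableSet hdisc κ
      (pairwise_disjoint_of_notMem_collisionSpacings ht hU)).le

/-- **The Ziv–Zakai bound without valley-filling vanishes for discrete inputs
(Proposition 3).** If `P_X` is purely atomic with countable support, then
`ZZ(P_X, P_{Y|X}, M) = 0` for every integer `M ≥ 2` and every Markov kernel. -/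
theorem ziv_zakai_discrete_eq_zero
    {d : ℕ} (hd : 1 ≤ d) {𝒴 : Type*} [MeasurableSpace 𝒴]
    (P : Measure (Fin d → ℝ)) [IsProbabilityMeasure P]
    (hcount : Set.Countable {x : Fin d → ℝ | P {x} ≠ 0})
    (hdisc : P {x : Fin d → ℝ | P {x} ≠ 0}ᶜ = 0)
    (κ : Kernel (Fin d → ℝ) 𝒴) [IsMarkovKernel κ]
    (M : ℕ) (hM : 2 ≤ M) :
    ZZ P κ M = 0 :=
  ziv_zakai_discrete_eq_zero_general P hcount hdisc κ M
end
end

section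
/- Let X be a real random variable with pdf f_X that is unimodal with mode at 0, i.e., f_X is non-decreasing on (−∞, 0] and non-increasing on [0, ∞), and let F_X denote its cumulative distribution function. Fix t > 0 and an integer M ≥ 2, and suppose a ∈ ℝ is a transition point for the pair (f_X(·), f_X(·+t)), i.e., max{f_X(x), f_X(x+t)} = f_X(x+t) for all x < a and max{f_X(x), f_X(x+t)} = f_X(x) for all x > a. Then ∫_{−∞}^{∞} max_{k∈[0:M−1]} f_X(x + kt) dx = 1 + (M−1)(F_X(a + t) − F_X(a)). -/
/-!
Write `g_M x = max_{k < M} f (x + k t)`. To the right of `a` the values `f (x + k t)` decrease in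
`k`, so `g_M = f` there; to the left of `a`, `f x ≤ f (x + t)` gives `g_{M+1} x = g_M (x + t)`.
Hence `g_{M+1} - g_M` vanishes on `(a, ∞)` and is `g_M (· + t) - g_M` on `(-∞, a)`, whose integral
is `∫_a^{a+t} g_M = ∫_a^{a+t} f = F (a + t) - F a`. Induction on `M` from `g_1 = f`.
-/

open MeasureTheory Set

theorem ciSup_fin_succ {α : Type*} [ConditionallyCompleteLinearOrder α] {n : ℕ} [NeZero n]
    (g : Fin (n + 1) → α) : ⨆ i, g i = max (g 0) (⨆ i : Fin n, g i.succ) := by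
  have hbdd : BddAbove (range g) := (finite_range g).bddAbove
  apply le_antisymm
  · refine ciSup_le (Fin.cases (le_max_left _ _) fun i => ?_)
    exact le_max_of_le_right
      (le_ciSup (f := fun i : Fin n => g i.succ) (finite_range _).bddAbove i)
  · exact max_le (le_ciSup hbdd 0) (ciSup_le fun i => le_ciSup hbdd i.succ)

theorem setIntegral_Iic_comp_add_right (G : ℝ → ℝ) (a t : ℝ) :
    ∫ x in Iic a, G (x + t) = ∫ x in Iic (a + t), G x := by
  have hpre : (· + t) ⁻¹' Iic (a + t) = Iic a := by ext; simp
  rw [← (measurePreserving_add_right volume t).setIntegral_preimage_emb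
    (measurableEmbedding_addRight t) G, hpre]

theorem setIntegral_Iic_sub_comp_add_right {G : ℝ → ℝ} (hG : Integrable G) (a t : ℝ) :
    ∫ x in Iic a, (G (x + t) - G x) = ∫ x in a..a + t, G x := by
  rw [integral_sub (hG.comp_add_right t).integrableOn hG.integrableOn,
    setIntegral_Iic_comp_add_right,
    intervalIntegral.integral_Iic_sub_Iic hG.integrableOn hG.integrableOn]

noncomputable def shiftMax (f : ℝ → ℝ) (t : ℝ) (M : ℕ) (x : ℝ) : ℝ := ⨆ k : Fin M, f (x + k * t)

section shiftMax

variable {f : ℝ → ℝ} {t a : ℝ} {M : ℕ}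

theorem shiftMax_one : shiftMax f t 1 = f := by
  funext x
  simp [shiftMax]

theorem shiftMax_succ [NeZero M] (x : ℝ) :
    shiftMax f t (M + 1) x = max (f x) (shiftMax f t M (x + t)) := by
  simp only [shiftMax, ciSup_fin_succ, Fin.val_zero, Fin.val_succ, Nat.cast_zero, zero_mul,
    add_zero]
  congr 1
  exact iSup_congr fun i => by push_cast; ring_nf

theorem le_shiftMax [NeZero M] (x : ℝ) : f x ≤ shiftMax f t M x := by
  refine le_ciSup_of_le (finite_range _).bddAbove 0 ?_
  simp

theorem integrable_shiftMax (hf : Integrable f) (hM : 1 ≤ M) : Integrable (shiftMax f t M) := by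
  induction M, hM using Nat.le_induction with
  | base => rwa [shiftMax_one]
  | succ M hM ih =>
    have : NeZero M := ⟨by omega⟩
    exact (hf.sup (ih.comp_add_right t)).congr (.of_forall fun x => (shiftMax_succ x).symm)

theorem shiftMax_of_gt (ht : 0 ≤ t) (hr : ∀ x > a, f (x + t) ≤ f x) (hM : 1 ≤ M)
    {x : ℝ} (hx : a < x) : shiftMax f t M x = f x := by
  induction M, hM using Nat.le_induction generalizing x with
  | base => rw [shiftMax_one]
  | succ M hM ih =>
    have : NeZero M := ⟨by omega⟩
    rw [shiftMax_succ, ih (by linarith), max_eq_left (hr x hx)]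

theorem shiftMax_succ_of_lt (hl : ∀ x < a, f x ≤ f (x + t)) [NeZero M] {x : ℝ} (hx : x < a) :
    shiftMax f t (M + 1) x = shiftMax f t M (x + t) := by
  rw [shiftMax_succ, max_eq_right ((hl x hx).trans (le_shiftMax _))]

theorem integral_shiftMax_succ (hf : Integrable f) (ht : 0 ≤ t)
    (hl : ∀ x < a, f x ≤ f (x + t)) (hr : ∀ x > a, f (x + t) ≤ f x) (hM : 1 ≤ M) :
    ∫ x, shiftMax f t (M + 1) x = (∫ x, shiftMax f t M x) + ∫ x in a..a + t, f x := by
  have : NeZero M := ⟨by omega⟩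
  have hdiff : (fun x => shiftMax f t (M + 1) x - shiftMax f t M x) =ᵐ[volume]
      (Iic a).indicator fun x => shiftMax f t M (x + t) - shiftMax f t M x := by
    filter_upwards [compl_mem_ae_iff.mpr (measure_singleton a)] with x hx
    rcases lt_or_gt_of_ne hx with hxa | hax
    · rw [indicator_of_mem (mem_Iic.mpr hxa.le), shiftMax_succ_of_lt hl hxa]
    · rw [indicator_of_notMem (notMem_Iic.mpr hax), shiftMax_of_gt ht hr hM hax,
        shiftMax_of_gt ht hr (by omega) hax, sub_self]
  have hgM := integrable_shiftMax (t := t) hf hM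
  rw [← sub_eq_iff_eq_add', ← integral_sub (integrable_shiftMax hf (by omega)) hgM,
    integral_congr_ae hdiff, integral_indicator measurableSet_Iic,
    setIntegral_Iic_sub_comp_add_right hgM]
  refine intervalIntegral.integral_congr_ae (Filter.Eventually.of_forall fun x hx => ?_)
  rw [uIoc_of_le (by linarith)] at hx
  exact shiftMax_of_gt ht hr hM hx.1

theorem integral_shiftMax (hf : Integrable f) (ht : 0 ≤ t)
    (hl : ∀ x < a, f x ≤ f (x + t)) (hr : ∀ x > a, f (x + t) ≤ f x) (hM : 1 ≤ M) :
    ∫ x, shiftMax f t M x = (∫ x, f x) + (M - 1) * ∫ x in a..a + t, f x := by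
  induction M, hM using Nat.le_induction with
  | base => simp [shiftMax_one]
  | succ M hM ih =>
    rw [integral_shiftMax_succ hf ht hl hr hM, ih]
    push_cast
    ring

end shiftMax

theorem unimodal_max_shift_integral_general
    (f : ℝ → ℝ)
    (hf_int : ∫ x, f x = 1)
    (t : ℝ) (ht : 0 < t) (M : ℕ) (hM : 2 ≤ M) (a : ℝ)
    (ha_left : ∀ x < a, max (f x) (f (x + t)) = f (x + t))
    (ha_right : ∀ x > a, max (f x) (f (x + t)) = f x) :
    ∫ x, (⨆ k : Fin M, f (x + (k : ℝ) * t)) =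
      1 + ((M : ℝ) - 1) *
        ((∫ u in Set.Iic (a + t), f u) - ∫ u in Set.Iic a, f u) := by
  have hf : Integrable f := Integrable.of_integral_ne_zero (by rw [hf_int]; exact one_ne_zero)
  have h := integral_shiftMax (M := M) hf ht.le (fun x hx => max_eq_right_iff.mp (ha_left x hx))
    (fun x hx => max_eq_left_iff.mp (ha_right x hx)) (by omega)
  rwa [hf_int, ← intervalIntegral.integral_Iic_sub_Iic hf.integrableOn hf.integrableOn] at h

/-- **Integral of the running maximum of shifted copies of a unimodal density
(Lemma 1).** Let `f` be a pdf on `ℝ` that is unimodal with mode at `0`, and let `a` be a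
transition point for the pair `(f(·), f(·+t))`.  Then
`∫ max_{k∈[0:M−1]} f(x + kt) dx = 1 + (M−1)(F(a+t) − F(a))`, where
`F(x) = ∫_{(-∞,x]} f` is the cdf. -/
theorem unimodal_max_shift_integral
    (f : ℝ → ℝ) (hf_meas : Measurable f) (hf_nonneg : ∀ x, 0 ≤ f x)
    (hf_int : ∫ x, f x = 1)
    (hf_mono : MonotoneOn f (Set.Iic 0)) (hf_anti : AntitoneOn f (Set.Ici 0))
    (t : ℝ) (ht : 0 < t) (M : ℕ) (hM : 2 ≤ M) (a : ℝ)
    (ha_left : ∀ x < a, max (f x) (f (x + t)) = f (x + t))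
    (ha_right : ∀ x > a, max (f x) (f (x + t)) = f x) :
    ∫ x, (⨆ k : Fin M, f (x + (k : ℝ) * t)) =
      1 + ((M : ℝ) - 1) *
        ((∫ u in Set.Iic (a + t), f u) - ∫ u in Set.Iic a, f u) :=
  unimodal_max_shift_integral_general f hf_int t ht M hM a ha_left ha_right
end

section
/- Let X be a discrete real random variable with countable support 𝒳 and pmf p_X (so p_X(x) = P(X = x) > 0 for x ∈ 𝒳 and ∑_{x∈𝒳} p_X(x) = 1). Then for every t > 0 and every integer M ≥ 2, ∑_{x ∈ X̄} max_{k∈[0:M−1]} p_X(x + kt) > 1, where X̄ = ⋃_{j=0}^{M−1} (𝒳 − jt) and 𝒳 − s = {x − s : x ∈ 𝒳}. -/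
/-!
Since `𝒳 ⊆ X̄` carries all the mass, `∑_{x ∈ X̄} p_X(x) = 1`, and the `k = 0` term bounds each
maximum from below by `p_X(x)`. The inequality is strict because `p_X` cannot be nondecreasing
along the descending progression `x₀, x₀ - t, x₀ - 2t, …` from a support point `x₀`: infinitely
many disjoint singletons of mass at least `p_X(x₀) > 0` would have infinite total mass. A step
`p_X(y) < p_X(y + t)` of that progression gives a point `y ∈ X̄` whose maximum exceeds `p_X(y)`.
-/

open MeasureTheory ENNReal

theorem tsum_measure_singleton_eq_one {α : Type*} [MeasurableSpace α] [MeasurableSingletonClass α]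
    (P : Measure α) [IsProbabilityMeasure P] {S : Set α} (hS : S.Countable) (hSc : P Sᶜ = 0) :
    ∑' x : S, P {(x : α)} = 1 := by
  have hPS : P S = 1 := (prob_compl_eq_zero_iff hS.measurableSet).1 hSc
  simpa [hPS] using tsum_measure_preimage_singleton (μ := P) (f := id) hS
    fun y _ ↦ measurableSet_singleton y

theorem exists_measure_singleton_succ_lt {α : Type*} [MeasurableSpace α]
    [MeasurableSingletonClass α] (μ : Measure α) [IsFiniteMeasure μ] {y : ℕ → α}
    (hy : Function.Injective y) (h0 : μ {y 0} ≠ 0) :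
    ∃ n, μ {y (n + 1)} < μ {y n} := by
  by_contra! hmono
  have hge : ∀ n, μ {y 0} ≤ μ {y n} := fun n ↦ by
    induction n with
    | zero => rfl
    | succ n ih => exact ih.trans (hmono n)
  have hinf : μ (Set.range y) = ∞ :=
    (Set.infinite_range_of_injective hy).meas_eq_top
      ⟨_, h0, Set.forall_mem_range.2 hge⟩
  exact measure_ne_top μ _ hinf

theorem exists_measure_singleton_lt_add (μ : Measure ℝ) [IsFiniteMeasure μ] {x t : ℝ}
    (hx : μ {x} ≠ 0) (ht : t ≠ 0) : ∃ y, μ {y} < μ {y + t} := by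
  have hinj : Function.Injective fun n : ℕ ↦ x - n * t := fun a b hab ↦ by
    simpa [ht] using hab
  obtain ⟨n, hn⟩ := exists_measure_singleton_succ_lt μ hinj (by simpa using hx)
  refine ⟨x - (n + 1 : ℕ) * t, ?_⟩
  convert hn using 3
  push_cast
  ring

/-- **Strict excess of the summed maxima of a shifted pmf (step (a)–(b) in the proof of
Theorem 4).** For a discrete real random variable with countable support `𝒳` and pmf
`p_X`, for every `t > 0` and `M ≥ 2`,
`∑_{x ∈ X̄} max_{k∈[0:M−1]} p_X(x + kt) > 1`, where `X̄ = ⋃_{j=0}^{M−1} (𝒳 − jt)`. -/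
theorem discrete_shifted_pmf_max_sum_gt_one
    (P : Measure ℝ) [IsProbabilityMeasure P]
    (hcount : Set.Countable {x : ℝ | P {x} ≠ 0})
    (hdisc : P {x : ℝ | P {x} ≠ 0}ᶜ = 0)
    (t : ℝ) (ht : 0 < t) (M : ℕ) (hM : 2 ≤ M) :
    1 < ∑' x : ↥(⋃ j : Fin M, (fun z => z - (j : ℝ) * t) '' {x : ℝ | P {x} ≠ 0}),
          ⨆ k : Fin M, P {(x : ℝ) + (k : ℝ) * t} := by
  set 𝒳 : Set ℝ := {x : ℝ | P {x} ≠ 0}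
  set S : Set ℝ := ⋃ j : Fin M, (fun z => z - (j : ℝ) * t) '' 𝒳
  have hMpos : NeZero M := ⟨by omega⟩
  have h𝒳S : 𝒳 ⊆ S := fun x hx ↦ Set.mem_iUnion.2 ⟨0, x, hx, by simp⟩
  have hsum : ∑' x : S, P {(x : ℝ)} = 1 :=
    tsum_measure_singleton_eq_one P (Set.countable_iUnion fun _ ↦ hcount.image _)
      (measure_mono_null (Set.compl_subset_compl.2 h𝒳S) hdisc)
  obtain ⟨x₀, hx₀⟩ : 𝒳.Nonempty := by
    by_contra h
    simp [Set.not_nonempty_iff_eq_empty.1 h] at hdisc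
  obtain ⟨y, hy⟩ := exists_measure_singleton_lt_add P hx₀ ht.ne'
  have hyS : y ∈ S := Set.mem_iUnion.2 ⟨⟨1, hM⟩, y + t, hy.ne_bot, by simp⟩
  rw [← hsum]
  refine ENNReal.tsum_lt_tsum (i := ⟨y, hyS⟩) (by simp [hsum])
    (fun x ↦ le_iSup_of_le 0 (by simp)) ?_
  exact hy.trans_le (le_iSup_of_le ⟨1, hM⟩ (by simp))
end

section
/- Let X be a discrete real random variable with countable support 𝒳, pmf p_X, and E[X] = 0. Then for every t > 0 and every integer M ≥ 2, P(|X| ≥ t/2) ≥ V_t{ (M − ∑_{x ∈ X̄(t)} max_{k∈[0:M−1]} p_X(x + kt)) / (M−1) }, where X̄(t) = ⋃_{j=0}^{M−1} (𝒳 − jt) and the valley-filling V_t is taken of the function of t given by the expression in braces. -/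
/-!
Fix `u ≥ t` and let `k̂(x) ∈ [0:M−1]` be the index for which `x + k̂(x) u` is nearest to `0`.
Every shift `x ↦ p_X(x + k u)` has total mass `1`, so
`M = ∑ₓ ∑ₖ p_X(x + k u) ≤ ∑ₓ maxₖ p_X(x + k u) + ∑ₓ ∑_{k ≠ k̂(x)} p_X(x + k u)`.
Substituting `y = x + k u` in the last sum, a pair `(y, k)` with `k ≠ k̂(y − k u)` forces
`|y| ≥ u/2`, and every `y` admits some `k` with `k = k̂(y − k u)`; so that sum is at most
`(M − 1) P(|X| ≥ u/2) ≤ (M − 1) P(|X| ≥ t/2)`, and the supremum over `u ≥ t` is the valley filling.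
-/

open MeasureTheory ENNReal

theorem sum_le_iSup_add_sum_ite {ι : Type*} [Fintype ι] [DecidableEq ι] (f : ι → ℝ≥0∞) (j : ι) :
    ∑ k, f k ≤ (⨆ k, f k) + ∑ k, (if j = k then 0 else f k) := by
  rw [← Finset.add_sum_erase _ f (Finset.mem_univ j),
    ← Finset.add_sum_erase _ (fun k => if j = k then 0 else f k) (Finset.mem_univ j), if_pos rfl,
    zero_add, Finset.sum_congr rfl fun k hk => if_neg (Finset.ne_of_mem_erase hk).symm]
  exact add_le_add_left (le_iSup f j) _

theorem tsum_comp_add_const {G α : Type*} [AddGroup G] [AddCommMonoid α] [TopologicalSpace α]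
    (f : G → α) (c : G) : ∑' x, f (x + c) = ∑' x, f x :=
  (Equiv.addRight c).tsum_eq f

theorem tsum_indicator_apply_singleton_of_measure_compl_atoms
    {α : Type*} [MeasurableSpace α] [MeasurableSingletonClass α] {μ : Measure α} [SFinite μ]
    (h : μ {x | μ {x} ≠ 0}ᶜ = 0) (s : Set α) :
    ∑' x, s.indicator (fun x => μ {x}) x = μ s := by
  have hatoms : {x | μ {x} ≠ 0}.Countable := by
    simpa [pos_iff_ne_zero, Set.ofPred_eq_eq_singleton] using
      Measure.countable_meas_level_set_pos (μ := μ) measurable_id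
  calc ∑' x, s.indicator (fun x => μ {x}) x
      = ∑' x, (s ∩ {x | μ {x} ≠ 0}).indicator (fun x => μ {x}) x := by
        have hatoms_indicator : {x | μ {x} ≠ 0}.indicator (fun x => μ {x}) = fun x => μ {x} :=
          Set.indicator_eq_self.mpr subset_rfl
        rw [← Set.indicator_indicator, hatoms_indicator]
    _ = ∑' x : ↥(s ∩ {x | μ {x} ≠ 0}), μ {(x : α)} := (tsum_subtype _ _).symm
    _ = μ (s ∩ {x | μ {x} ≠ 0}) := by
        simpa using tsum_measure_preimage_singleton (μ := μ) (hatoms.mono Set.inter_subset_right)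
          (f := id) fun _ _ => measurableSet_singleton _
    _ = μ s := measure_inter_conull h

/-- For `u > 0`, the index `k ∈ [0:M−1]` minimising `|x + k u|`: `−x/u` rounded to the nearest
integer, then clipped. -/
noncomputable def nearestShiftIndex (M : ℕ) [NeZero M] (u x : ℝ) : Fin M :=
  ⟨min (M - 1) ⌊1 / 2 - x / u⌋₊, by have := NeZero.pos M; omega⟩

section nearestShiftIndex

variable {M : ℕ} [NeZero M] {u : ℝ}

theorem nearestShiftIndex_sub_mul (hu : 0 < u) {y : ℝ} (hy : |y| < u / 2) (k : Fin M) :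
    nearestShiftIndex M u (y - k * u) = k := by
  have hshift : 1 / 2 - (y - k * u) / u = k + (1 / 2 - y / u) := by field_simp; ring
  obtain ⟨hy₁, hy₂⟩ := abs_lt.mp hy
  have hlo : -(1 / 2) < y / u := by rw [lt_div_iff₀ hu]; linarith
  have hhi : y / u < 1 / 2 := by rw [div_lt_iff₀ hu]; linarith
  have hfloor : ⌊1 / 2 - (y - k * u) / u⌋₊ = k := by
    rw [hshift, Nat.floor_eq_iff (by positivity)]
    constructor <;> linarith
  ext
  simp only [nearestShiftIndex, hfloor]
  omega

theorem exists_nearestShiftIndex_sub_mul_eq (hu : 0 < u) (y : ℝ) :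
    ∃ k : Fin M, nearestShiftIndex M u (y - k * u) = k := by
  have hM := NeZero.pos M
  rcases lt_or_ge (-(u / 2)) y with hy | hy
  · refine ⟨⟨0, hM⟩, Fin.ext ?_⟩
    have hlo : -(1 / 2) < y / u := by rw [lt_div_iff₀ hu]; linarith
    have hlt : 1 / 2 - y / u < 1 := by linarith
    show min (M - 1) ⌊1 / 2 - (y - ((0 : ℕ) : ℝ) * u) / u⌋₊ = 0
    rw [Nat.cast_zero, zero_mul, sub_zero, Nat.floor_eq_zero.mpr hlt, min_zero]
  · refine ⟨⟨M - 1, by omega⟩, Fin.ext ?_⟩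
    have hfloor : M - 1 ≤ ⌊1 / 2 - (y - ((M - 1 : ℕ) : ℝ) * u) / u⌋₊ := by
      have hhi : 1 / 2 ≤ -y / u := by rw [le_div_iff₀ hu]; linarith
      have hshift :
          1 / 2 - (y - ((M - 1 : ℕ) : ℝ) * u) / u = (M - 1 : ℕ) + (1 / 2 + -y / u) := by
        field_simp; ring
      rw [Nat.le_floor_iff (by rw [hshift]; positivity), hshift]
      linarith
    simp only [nearestShiftIndex]
    omega

theorem sum_ite_nearestShiftIndex_le (hu : 0 < u) (p : ℝ → ℝ≥0∞) (y : ℝ) :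
    ∑ k : Fin M, (if nearestShiftIndex M u (y - k * u) = k then 0 else p y)
      ≤ ((M : ℝ≥0∞) - 1) * {y | u / 2 ≤ |y|}.indicator p y := by
  by_cases hy : u / 2 ≤ |y|
  · obtain ⟨k₀, hk₀⟩ := exists_nearestShiftIndex_sub_mul_eq (M := M) hu y
    rw [Set.indicator_of_mem (s := {y | u / 2 ≤ |y|}) hy,
      ← Finset.add_sum_erase _ _ (Finset.mem_univ k₀), if_pos hk₀, zero_add]
    calc _ ≤ ∑ _k ∈ Finset.univ.erase k₀, p y := Finset.sum_le_sum fun k _ => by split <;> simp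
      _ = _ := by simp [Finset.card_erase_of_mem, ENNReal.natCast_sub, nsmul_eq_mul]
  · rw [Finset.sum_eq_zero fun k _ => if_pos (nearestShiftIndex_sub_mul hu (not_le.mp hy) k)]
    exact zero_le

theorem tsum_sum_ite_nearestShiftIndex_le (hu : 0 < u) (p : ℝ → ℝ≥0∞) :
    ∑' x, ∑ k : Fin M, (if nearestShiftIndex M u x = k then 0 else p (x + k * u))
      ≤ ((M : ℝ≥0∞) - 1) * ∑' y, {y | u / 2 ≤ |y|}.indicator p y :=
  calc ∑' x, ∑ k : Fin M, (if nearestShiftIndex M u x = k then 0 else p (x + k * u))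
      = ∑ k : Fin M, ∑' y, (if nearestShiftIndex M u (y - k * u) = k then 0 else p y) := by
        rw [Summable.tsum_finsetSum fun _ _ => ENNReal.summable]
        refine Finset.sum_congr rfl fun k _ => ?_
        rw [← (Equiv.subRight ((k : ℝ) * u)).tsum_eq]
        simp only [Equiv.subRight_apply, sub_add_cancel]
    _ = ∑' y, ∑ k : Fin M, (if nearestShiftIndex M u (y - k * u) = k then 0 else p y) :=
        (Summable.tsum_finsetSum fun _ _ => ENNReal.summable).symm
    _ ≤ ∑' y, ((M : ℝ≥0∞) - 1) * {y | u / 2 ≤ |y|}.indicator p y :=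
        ENNReal.tsum_le_tsum fun y => sum_ite_nearestShiftIndex_le hu p y
    _ = _ := ENNReal.tsum_mul_left

theorem natCast_mul_tsum_le_tsum_iSup_add_tail (hu : 0 < u) (p : ℝ → ℝ≥0∞) :
    (M : ℝ≥0∞) * ∑' y, p y
      ≤ ∑' x, (⨆ k : Fin M, p (x + k * u))
        + ((M : ℝ≥0∞) - 1) * ∑' y, {y | u / 2 ≤ |y|}.indicator p y :=
  calc (M : ℝ≥0∞) * ∑' y, p y = ∑ k : Fin M, ∑' x, p (x + k * u) := by
        simp [tsum_comp_add_const]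
    _ = ∑' x, ∑ k : Fin M, p (x + k * u) :=
        (Summable.tsum_finsetSum fun _ _ => ENNReal.summable).symm
    _ ≤ ∑' x, ((⨆ k : Fin M, p (x + k * u))
          + ∑ k : Fin M, (if nearestShiftIndex M u x = k then 0 else p (x + k * u))) :=
        ENNReal.tsum_le_tsum fun x => sum_le_iSup_add_sum_ite _ _
    _ ≤ _ := by
        rw [ENNReal.tsum_add]
        exact add_le_add_right (tsum_sum_ite_nearestShiftIndex_le hu p) _

end nearestShiftIndex

theorem support_iSup_comp_add_mul_subset (p : ℝ → ℝ≥0∞) (M : ℕ) (u : ℝ) :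
    Function.support (fun x => ⨆ k : Fin M, p (x + k * u))
      ⊆ ⋃ j : Fin M, (fun z => z - j * u) '' {x | p x ≠ 0} := by
  intro x hx
  obtain ⟨k, hk⟩ : ∃ k : Fin M, p (x + k * u) ≠ 0 := by
    by_contra! h
    exact hx (by simp [h])
  exact Set.mem_iUnion.mpr ⟨k, x + k * u, hk, add_sub_cancel_right x _⟩

theorem discrete_tail_prob_ge_valley_filled_bound_general
    (P : Measure ℝ) [IsProbabilityMeasure P]
    (hdisc : P {x : ℝ | P {x} ≠ 0}ᶜ = 0)
    (t : ℝ) (ht : 0 < t) (M : ℕ) (hM : 2 ≤ M) :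
    (⨆ (u : ℝ) (_ : t ≤ u),
        ((M : ℝ≥0∞) -
            ∑' x : ↥(⋃ j : Fin M, (fun z => z - (j : ℝ) * u) '' {x : ℝ | P {x} ≠ 0}),
              ⨆ k : Fin M, P {(x : ℝ) + (k : ℝ) * u}) /
          ((M : ℝ≥0∞) - 1))
      ≤ P {x : ℝ | t / 2 ≤ |x|} := by
  have : NeZero M := ⟨by omega⟩
  refine iSup₂_le fun u htu => ?_
  have hmass := tsum_indicator_apply_singleton_of_measure_compl_atoms hdisc Set.univ
  have htail := tsum_indicator_apply_singleton_of_measure_compl_atoms hdisc {y | u / 2 ≤ |y|}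
  rw [Set.indicator_univ, measure_univ] at hmass
  have key := natCast_mul_tsum_le_tsum_iSup_add_tail (M := M) (ht.trans_le htu) fun x => P {x}
  rw [hmass, htail, mul_one] at key
  rw [tsum_subtype_eq_of_support_subset (f := fun x => ⨆ k : Fin M, P {x + k * u})
    (support_iSup_comp_add_mul_subset (fun x => P {x}) M u)]
  calc _ ≤ P {x : ℝ | u / 2 ≤ |x|} :=
        ENNReal.div_le_of_le_mul (tsub_le_iff_left.mpr (by rwa [mul_comm] at key))
    _ ≤ _ := measure_mono fun x (hx : u / 2 ≤ |x|) => show t / 2 ≤ |x| by linarith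

/-- **Valley-filled Ziv–Zakai lower bound on tail probabilities for a discrete input
(inequality (27) in the proof of Theorem 4).** For a discrete real random variable `X`
with countable support `𝒳`, pmf `p_X` and `E[X] = 0`, for every `t > 0` and `M ≥ 2`,
`P(|X| ≥ t/2) ≥ V_t{ (M − ∑_{x ∈ X̄(t)} max_k p_X(x + kt)) / (M−1) }`,
where `X̄(u) = ⋃_{j=0}^{M−1} (𝒳 − ju)` and `V_t` is the valley-filling function. -/
theorem discrete_tail_prob_ge_valley_filled_bound
    (P : Measure ℝ) [IsProbabilityMeasure P]
    (hcount : Set.Countable {x : ℝ | P {x} ≠ 0})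
    (hdisc : P {x : ℝ | P {x} ≠ 0}ᶜ = 0)
    (hint : Integrable (fun x => x) P)
    (hmean : ∫ x, x ∂P = 0)
    (t : ℝ) (ht : 0 < t) (M : ℕ) (hM : 2 ≤ M) :
    (⨆ (u : ℝ) (_ : t ≤ u),
        ((M : ℝ≥0∞) -
            ∑' x : ↥(⋃ j : Fin M, (fun z => z - (j : ℝ) * u) '' {x : ℝ | P {x} ≠ 0}),
              ⨆ k : Fin M, P {(x : ℝ) + (k : ℝ) * u}) /
          ((M : ℝ≥0∞) - 1))
      ≤ P {x : ℝ | t / 2 ≤ |x|} :=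
  discrete_tail_prob_ge_valley_filled_bound_general P hdisc t ht M hM
end
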